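/- Let p be a nonzero prime ideal of O_K with absolute norm N(p) = q and let ℓ ≥ 1. Then d_E(L_ℓ)² / d_E(L_0)² ≥ q^{2ℓ/m}, where L_0 = τ(O_K) and L_ℓ = τ(p^ℓ). Consequently, any q-ary code C_0 of length n with minimum Hamming distance at least ⌈ d_E(L_ℓ)² / d_E(L_0)² ⌉ must have n ≥ ⌈ q^{2ℓ/m} ⌉; equivalently, ℓ ≤ ⌊ (m/2)·log_q n ⌋. -/

import Mathlib

open scoped BigOperators
open MeasureTheory

noncomputable section

/-- The index set for `ℝ^{s+2t}`: `s` real coordinates and `t` pairs of coordinates. -/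
abbrev PackIdx (s t : ℕ) := Fin s ⊕ Fin t × Fin 2

/-- The canonical embedding `τ : K → ℝ^{s+2t}`,
`τ(α) = (ρ₁(α),…,ρ_s(α), √2·Re σ₁(α), √2·Im σ₁(α), …, √2·Re σ_t(α), √2·Im σ_t(α))`. -/
def tauEmb {K : Type*} [Field K] {s t : ℕ}
    (ρ : Fin s → (K →+* ℝ)) (σ : Fin t → (K →+* ℂ)) (α : K) :
    EuclideanSpace ℝ (PackIdx s t) :=
  (EuclideanSpace.equiv (PackIdx s t) ℝ).symm <|
    Sum.elim (fun i => ρ i α)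
      (fun p => if p.2 = (0 : Fin 2) then Real.sqrt 2 * (σ p.1 α).re
                else Real.sqrt 2 * (σ p.1 α).im)

/-- The system of `s + 2t` field embeddings `K → ℂ` determined by the data `ρ, σ`:
the real embeddings `ρᵢ` and the complex embeddings `σⱼ` together with their conjugates. -/
def embSystem {K : Type*} [Field K] {s t : ℕ}
    (ρ : Fin s → (K →+* ℝ)) (σ : Fin t → (K →+* ℂ)) : PackIdx s t → (K →+* ℂ) :=
  Sum.elim (fun i => Complex.ofRealHom.comp (ρ i))
    (fun p => if p.2 = (0 : Fin 2) then σ p.1 else (starRingEnd ℂ).comp (σ p.1))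

/-- `ρ, σ` list exactly the real embeddings and the pairs of complex-conjugate embeddings
of `K`, without repetition: the associated system of `s+2t` embeddings `K → ℂ` is a
bijective enumeration of all field embeddings `K → ℂ`. -/
def IsEmbSystem {K : Type*} [Field K] {s t : ℕ}
    (ρ : Fin s → (K →+* ℝ)) (σ : Fin t → (K →+* ℂ)) : Prop :=
  Function.Bijective (embSystem ρ σ)

/-- The minimum (infimal) Euclidean distance between two distinct points of `P`. -/
def minDist {E : Type*} [MetricSpace E] (P : Set E) : ℝ :=
  sInf {d : ℝ | ∃ x ∈ P, ∃ y ∈ P, x ≠ y ∧ dist x y = d}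

/-- The volume `V_N` of the unit ball in `ℝ^N` (with index set `ι`, `N = |ι|`). -/
def unitBallVol (ι : Type*) [Fintype ι] : ℝ :=
  (volume (Metric.ball (0 : EuclideanSpace ℝ ι) 1)).toReal

/-- The packing density
`Δ(P) = limsup_{R→∞} |P ∩ B(R)| · r^N · V_N / vol(B(R+r))`, where `r = d_E(P)/2`. -/
def packDensity {ι : Type*} [Fintype ι] (P : Set (EuclideanSpace ℝ ι)) : ℝ :=
  Filter.limsup (fun R : ℝ =>
    (Nat.card (P ∩ Metric.closedBall 0 R : Set (EuclideanSpace ℝ ι)) : ℝ) *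
      (minDist P / 2) ^ (Fintype.card ι) * unitBallVol ι /
      (volume (Metric.closedBall (0 : EuclideanSpace ℝ ι) (R + minDist P / 2))).toReal)
    Filter.atTop

/-- `L_I = τ(I)`, the image in `ℝ^{s+2t}` of an ideal `I` of the ring of integers under the
canonical embedding. -/
def idealImage {K : Type*} [Field K] [NumberField K] {s t : ℕ}
    (ρ : Fin s → (K →+* ℝ)) (σ : Fin t → (K →+* ℂ))
    (I : Ideal (NumberField.RingOfIntegers K)) : Set (EuclideanSpace ℝ (PackIdx s t)) :=
  (fun a : NumberField.RingOfIntegers K =>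
    tauEmb ρ σ (algebraMap (NumberField.RingOfIntegers K) K a)) '' (I : Set _)

/-- The coordinatewise extension `τ : K^n → ℝ^{mn}`. -/
def tauEmbN {K : Type*} [Field K] {s t : ℕ} {n : ℕ}
    (ρ : Fin s → (K →+* ℝ)) (σ : Fin t → (K →+* ℂ)) (c : Fin n → K) :
    EuclideanSpace ℝ (Fin n × PackIdx s t) :=
  (EuclideanSpace.equiv (Fin n × PackIdx s t) ℝ).symm fun p => tauEmb ρ σ (c p.1) p.2

/-- The Cartesian product `L^n ⊆ ℝ^{mn}` of `n` copies of `L ⊆ ℝ^m`. -/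
def prodSet {ι : Type*} (n : ℕ) (L : Set (EuclideanSpace ℝ ι)) :
    Set (EuclideanSpace ℝ (Fin n × ι)) :=
  {x | ∀ j : Fin n,
    ((EuclideanSpace.equiv ι ℝ).symm fun i => (EuclideanSpace.equiv (Fin n × ι) ℝ) x (j, i)) ∈ L}

/-- `S` is a valid alphabet set at level `i`: a set of `q` elements of `p^i` containing `0`
whose residues modulo `p^{i+1}` represent the `q` distinct elements of `p^i/p^{i+1}`. -/
def IsRepSet {K : Type*} [Field K] [NumberField K]
    (p : Ideal (NumberField.RingOfIntegers K)) (i q : ℕ)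
    (S : Set (NumberField.RingOfIntegers K)) : Prop :=
  S ⊆ (p ^ i : Ideal (NumberField.RingOfIntegers K)) ∧ (0 : NumberField.RingOfIntegers K) ∈ S ∧
    Nat.card S = q ∧
    (∀ x ∈ S, ∀ y ∈ S, x ≠ y → x - y ∉ (p ^ (i + 1) : Ideal (NumberField.RingOfIntegers K))) ∧
    (∀ z ∈ (p ^ i : Ideal (NumberField.RingOfIntegers K)), ∃ a ∈ S,
      z - a ∈ (p ^ (i + 1) : Ideal (NumberField.RingOfIntegers K)))

/-- Hamming distance between two words. -/
def hDist {n : ℕ} {A : Type*} (u v : Fin n → A) : ℕ := Nat.card {j : Fin n // u j ≠ v j}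

/-- The minimum Hamming distance of a code `C`. -/
def codeMinDist {n : ℕ} {A : Type*} (C : Set (Fin n → A)) : ℕ :=
  sInf {d : ℕ | ∃ u ∈ C, ∃ v ∈ C, u ≠ v ∧ hDist u v = d}

/-- `C` is an `(n, M, d)`-code over the alphabet set `S`. -/
def IsCode {A : Type*} {n : ℕ} (S : Set A) (M d : ℕ) (C : Set (Fin n → A)) : Prop :=
  (∀ c ∈ C, ∀ j, c j ∈ S) ∧ Nat.card C = M ∧ codeMinDist C = d

/-- The translate `τ(c) + P` of `P` by the embedded codeword `c`. -/
def wordTranslate {K : Type*} [Field K] [NumberField K] {s t n : ℕ}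
    (ρ : Fin s → (K →+* ℝ)) (σ : Fin t → (K →+* ℂ))
    (c : Fin n → NumberField.RingOfIntegers K)
    (P : Set (EuclideanSpace ℝ (Fin n × PackIdx s t))) :
    Set (EuclideanSpace ℝ (Fin n × PackIdx s t)) :=
  {z | ∃ x ∈ P, z = tauEmbN ρ σ (fun j => algebraMap (NumberField.RingOfIntegers K) K (c j)) + x}

/-- The concatenation `τ(C) + P = { τ(c) + p : c ∈ C, p ∈ P }`. -/
def codeTranslate {K : Type*} [Field K] [NumberField K] {s t n : ℕ}
    (ρ : Fin s → (K →+* ℝ)) (σ : Fin t → (K →+* ℂ))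
    (C : Set (Fin n → NumberField.RingOfIntegers K))
    (P : Set (EuclideanSpace ℝ (Fin n × PackIdx s t))) :
    Set (EuclideanSpace ℝ (Fin n × PackIdx s t)) :=
  {z | ∃ c ∈ C, ∃ x ∈ P,
    z = tauEmbN ρ σ (fun j => algebraMap (NumberField.RingOfIntegers K) K (c j)) + x}

/-- The concatenation `τ(𝒞) + P = { Σ_{i<ℓ} τ(cᵢ) + p : cᵢ ∈ Cᵢ, p ∈ P }` of a family of codes. -/
def famTranslate {K : Type*} [Field K] [NumberField K] {s t n ℓ : ℕ}
    (ρ : Fin s → (K →+* ℝ)) (σ : Fin t → (K →+* ℂ))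
    (C : Fin ℓ → Set (Fin n → NumberField.RingOfIntegers K))
    (P : Set (EuclideanSpace ℝ (Fin n × PackIdx s t))) :
    Set (EuclideanSpace ℝ (Fin n × PackIdx s t)) :=
  {z | ∃ c : Fin ℓ → (Fin n → NumberField.RingOfIntegers K), (∀ i, c i ∈ C i) ∧ ∃ x ∈ P,
    z = (∑ i : Fin ℓ,
      tauEmbN ρ σ (fun j => algebraMap (NumberField.RingOfIntegers K) K (c i j))) + x}


/-! For a nonzero `δ` in an ideal `I` of `𝓞 K`, `‖τ δ‖² = ∑_φ |φ δ|²`, and AM-GM bounds this sum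
below by `m · (∏_φ |φ δ|)^{2/m} = m · |N δ|^{2/m} ≥ m · N(I)^{2/m}`, since `(δ) ⊆ I` gives
`N(I) ∣ |N δ|`. Hence `d_E(τ(p^ℓ))² ≥ m q^{2ℓ/m}`, while `d_E(τ(𝓞 K))² = m`, attained by `1`.
The bound on `n` follows because a Hamming distance is at most the length. -/

open NumberField

section MinDist

variable {E : Type*} [MetricSpace E] {P : Set E}

lemma minDist_nonneg : 0 ≤ minDist P :=
  Real.sInf_nonneg fun _ ⟨_, _, _, _, _, hd⟩ => hd ▸ dist_nonneg

lemma le_minDist {d : ℝ} (hP : ∃ x ∈ P, ∃ y ∈ P, x ≠ y)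
    (h : ∀ x ∈ P, ∀ y ∈ P, x ≠ y → d ≤ dist x y) : d ≤ minDist P := by
  obtain ⟨x, hx, y, hy, hxy⟩ := hP
  refine le_csInf ⟨_, x, hx, y, hy, hxy, rfl⟩ ?_
  rintro _ ⟨x, hx, y, hy, hxy, rfl⟩
  exact h x hx y hy hxy

lemma minDist_le_dist {x y : E} (hx : x ∈ P) (hy : y ∈ P) (hxy : x ≠ y) :
    minDist P ≤ dist x y :=
  csInf_le ⟨0, fun _ ⟨_, _, _, _, _, hd⟩ => hd ▸ dist_nonneg⟩ ⟨x, hx, y, hy, hxy, rfl⟩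

end MinDist

lemma hDist_le_length {n : ℕ} {A : Type*} (u v : Fin n → A) : hDist u v ≤ n := by
  simpa [hDist] using Finite.card_subtype_le (fun j => u j ≠ v j)

lemma Real.card_mul_prod_rpow_inv_card_le_sum {ι : Type*} [Fintype ι] [Nonempty ι] {z : ι → ℝ}
    (hz : ∀ i, 0 ≤ z i) :
    Fintype.card ι * (∏ i, z i) ^ (Fintype.card ι : ℝ)⁻¹ ≤ ∑ i, z i := by
  have hcard : (0 : ℝ) < Fintype.card ι := by exact_mod_cast Fintype.card_pos
  have amgm := Real.geom_mean_le_arith_mean Finset.univ (fun _ => 1) z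
    (fun _ _ => zero_le_one) (by simpa using hcard) (fun i _ => hz i)
  simp only [Real.rpow_one, one_mul, Finset.sum_const, Finset.card_univ, nsmul_eq_mul,
    mul_one] at amgm
  rw [le_div_iff₀ hcard] at amgm
  linarith

lemma Ideal.absNorm_le_natAbs_norm_of_mem {S : Type*} [CommRing S]
    [IsDedekindDomain S] [Module.Free ℤ S] [Module.Finite ℤ S] {I : Ideal S} {x : S}
    (hx : x ∈ I) (hx0 : x ≠ 0) : Ideal.absNorm I ≤ (Algebra.norm ℤ x).natAbs := by
  rw [← Ideal.absNorm_span_singleton]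
  refine Nat.le_of_dvd (Nat.pos_of_ne_zero ?_) (Ideal.absNorm_dvd_absNorm_of_le ?_)
  · rwa [ne_eq, Ideal.absNorm_eq_zero_iff, Ideal.span_singleton_eq_bot]
  · exact (Ideal.span_singleton_le_iff_mem _).mpr hx

lemma le_floor_half_mul_logb {q : ℝ} {m n ℓ : ℕ} (hq : 1 < q) (hm : 0 < m)
    (h : ⌈q ^ (2 * (ℓ : ℝ) / m)⌉₊ ≤ n) : ℓ ≤ ⌊(m : ℝ) / 2 * Real.logb q n⌋₊ := by
  have hq0 : 0 < q := zero_lt_one.trans hq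
  have hlog : 2 * (ℓ : ℝ) / m ≤ Real.logb q n := by
    rw [← Real.logb_rpow hq0 hq.ne' (x := 2 * (ℓ : ℝ) / m)]
    exact Real.logb_le_logb_of_le hq (by positivity) (Nat.ceil_le.mp h)
  apply Nat.le_floor
  calc (ℓ : ℝ) = (m : ℝ) / 2 * (2 * (ℓ : ℝ) / m) := by field_simp
    _ ≤ (m : ℝ) / 2 * Real.logb q n := by gcongr

section CanonicalEmbedding

variable {K : Type*} [Field K] {s t : ℕ} (ρ : Fin s → (K →+* ℝ)) (σ : Fin t → (K →+* ℂ))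

lemma tauEmb_sub (a b : K) : tauEmb ρ σ (a - b) = tauEmb ρ σ a - tauEmb ρ σ b := by
  ext (i | ⟨j, k⟩)
  · simp [tauEmb]
  · fin_cases k <;> simp [tauEmb] <;> ring

variable [NumberField K] {ρ σ}

lemma finrank_eq_of_isEmbSystem (hemb : IsEmbSystem ρ σ) : Module.finrank ℚ K = s + 2 * t := by
  rw [← NumberField.Embeddings.card K ℂ, ← Fintype.card_of_bijective hemb]
  simp [mul_comm]

lemma norm_tauEmb_sq (hemb : IsEmbSystem ρ σ) (x : K) :
    ‖tauEmb ρ σ x‖ ^ 2 = ∑ φ : K →+* ℂ, ‖φ x‖ ^ 2 := by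
  rw [EuclideanSpace.norm_sq_eq,
    ← Fintype.sum_bijective _ hemb (fun i => ‖embSystem ρ σ i x‖ ^ 2) _ fun _ => rfl]
  simp only [Fintype.sum_sum_type, Fintype.sum_prod_type, Fin.sum_univ_two]
  congr 1
  · simp [tauEmb, embSystem]
  · refine Finset.sum_congr rfl fun j _ => ?_
    simp [tauEmb, embSystem, mul_pow, Complex.sq_norm, Complex.normSq_apply]
    ring

lemma prod_norm_embeddings_eq_abs_norm (x : K) :
    ∏ φ : K →+* ℂ, ‖φ x‖ = |(Algebra.norm ℚ x : ℝ)| := by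
  rw [Fintype.prod_equiv (RingHom.equivRatAlgHom K ℂ) _ (fun φ => ‖φ x‖)
      fun _ => by simp [RingHom.equivRatAlgHom_apply], ← norm_prod,
    ← Algebra.norm_eq_prod_embeddings, eq_ratCast, Complex.norm_ratCast]

lemma finrank_mul_abs_norm_rpow_le_sum_sq (x : K) :
    Module.finrank ℚ K * |(Algebra.norm ℚ x : ℝ)| ^ (2 / Module.finrank ℚ K : ℝ) ≤
      ∑ φ : K →+* ℂ, ‖φ x‖ ^ 2 := by
  have amgm := Real.card_mul_prod_rpow_inv_card_le_sum (fun φ : K →+* ℂ => sq_nonneg ‖φ x‖)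
  rwa [NumberField.Embeddings.card K ℂ, Finset.prod_pow, prod_norm_embeddings_eq_abs_norm,
    ← Real.rpow_natCast, ← Real.rpow_mul (abs_nonneg _), Nat.cast_ofNat, ← div_eq_mul_inv] at amgm

lemma finrank_mul_absNorm_rpow_le_norm_tauEmb_sq (hemb : IsEmbSystem ρ σ) {I : Ideal (𝓞 K)}
    {x : 𝓞 K} (hx : x ∈ I) (hx0 : x ≠ 0) :
    Module.finrank ℚ K * (Ideal.absNorm I : ℝ) ^ (2 / Module.finrank ℚ K : ℝ) ≤
      ‖tauEmb ρ σ (algebraMap (𝓞 K) K x)‖ ^ 2 := by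
  have hnorm : (Ideal.absNorm I : ℝ) ≤ |(Algebra.norm ℚ (algebraMap (𝓞 K) K x) : ℝ)| := by
    rw [← RingOfIntegers.coe_eq_algebraMap, ← Algebra.coe_norm_int, Rat.cast_intCast,
      ← Int.cast_abs, ← Int.natCast_natAbs, Int.cast_natCast]
    exact_mod_cast Ideal.absNorm_le_natAbs_norm_of_mem hx hx0
  rw [norm_tauEmb_sq hemb]
  refine le_trans ?_ (finrank_mul_abs_norm_rpow_le_sum_sq _)
  gcongr

lemma finrank_mul_absNorm_rpow_le_sq_minDist (hemb : IsEmbSystem ρ σ) {I : Ideal (𝓞 K)}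
    (hI : I ≠ ⊥) :
    Module.finrank ℚ K * (Ideal.absNorm I : ℝ) ^ (2 / Module.finrank ℚ K : ℝ) ≤
      minDist (idealImage ρ σ I) ^ 2 := by
  set c := Module.finrank ℚ K * (Ideal.absNorm I : ℝ) ^ (2 / Module.finrank ℚ K : ℝ)
  have hc : 0 < c := by
    have := Module.finrank_pos (R := ℚ) (M := K)
    have := Nat.pos_of_ne_zero (Ideal.absNorm_eq_zero_iff.not.mpr hI)
    positivity
  have hdist {a b : 𝓞 K} (ha : a ∈ I) (hb : b ∈ I) (hab : a ≠ b) :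
      c ≤ dist (tauEmb ρ σ (algebraMap (𝓞 K) K a)) (tauEmb ρ σ (algebraMap (𝓞 K) K b)) ^ 2 := by
    rw [dist_eq_norm, ← tauEmb_sub, ← map_sub]
    exact finrank_mul_absNorm_rpow_le_norm_tauEmb_sq hemb (I.sub_mem ha hb) (sub_ne_zero.mpr hab)
  obtain ⟨x, hxI, hx0⟩ := Submodule.exists_mem_ne_zero_of_ne_bot hI
  have hpair : ∃ u ∈ idealImage ρ σ I, ∃ v ∈ idealImage ρ σ I, u ≠ v := by
    refine ⟨_, ⟨x, hxI, rfl⟩, _, ⟨0, I.zero_mem, rfl⟩, fun h => ?_⟩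
    have := hdist hxI I.zero_mem hx0
    rw [show tauEmb ρ σ (algebraMap (𝓞 K) K x) = _ from h, dist_self] at this
    linarith
  refine (Real.sqrt_le_iff.mp (le_minDist hpair ?_)).2
  rintro _ ⟨a, ha, rfl⟩ _ ⟨b, hb, rfl⟩ hab
  exact (Real.sqrt_le_left dist_nonneg).mpr (hdist ha hb (by rintro rfl; exact hab rfl))

lemma sq_minDist_idealImage_top (hemb : IsEmbSystem ρ σ) :
    minDist (idealImage ρ σ ⊤) ^ 2 = Module.finrank ℚ K := by
  have hlower := finrank_mul_absNorm_rpow_le_sq_minDist hemb (I := ⊤) top_ne_bot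
  rw [Ideal.absNorm_top, Nat.cast_one, Real.one_rpow, mul_one] at hlower
  have hone : ‖tauEmb ρ σ (algebraMap (𝓞 K) K 1)‖ ^ 2 = Module.finrank ℚ K := by
    simp [norm_tauEmb_sq hemb, NumberField.Embeddings.card K ℂ]
  have hne : tauEmb ρ σ (algebraMap (𝓞 K) K 1) ≠ tauEmb ρ σ (algebraMap (𝓞 K) K 0) := by
    rw [← sub_ne_zero, ← tauEmb_sub, ← map_sub, sub_zero, ← norm_ne_zero_iff]
    intro h
    have : (0 : ℝ) < Module.finrank ℚ K := by exact_mod_cast Module.finrank_pos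
    rw [h, zero_pow two_ne_zero] at hone
    linarith
  refine le_antisymm ?_ hlower
  have hle := minDist_le_dist (P := idealImage ρ σ ⊤)
    ⟨1, Submodule.mem_top, rfl⟩ ⟨0, Submodule.mem_top, rfl⟩ hne
  rw [dist_eq_norm, ← tauEmb_sub, ← map_sub, sub_zero] at hle
  rw [← hone]
  gcongr
  exact minDist_nonneg

end CanonicalEmbedding

theorem statement14_general {K : Type*} [Field K] [NumberField K] {s t m : ℕ}
    (ρ : Fin s → (K →+* ℝ)) (σ : Fin t → (K →+* ℂ)) (hemb : IsEmbSystem ρ σ)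
    (hm : m = s + 2 * t)
    (p : Ideal (NumberField.RingOfIntegers K)) (hp : p.IsPrime) (hp0 : p ≠ ⊥)
    (q : ℕ) (hq : Ideal.absNorm p = q) (ℓ : ℕ) :
    (q : ℝ) ^ (2 * (ℓ : ℝ) / (m : ℝ)) ≤
      (minDist (idealImage ρ σ (p ^ ℓ))) ^ 2 / (minDist (idealImage ρ σ (p ^ 0))) ^ 2 ∧
    ∀ (n : ℕ) (C₀ : Set (Fin n → NumberField.RingOfIntegers K)),
      (∃ u ∈ C₀, ∃ v ∈ C₀, u ≠ v) →
      (∀ u ∈ C₀, ∀ v ∈ C₀, u ≠ v →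
        ⌈(minDist (idealImage ρ σ (p ^ ℓ))) ^ 2 /
          (minDist (idealImage ρ σ (p ^ 0))) ^ 2⌉₊ ≤ hDist u v) →
      ⌈(q : ℝ) ^ (2 * (ℓ : ℝ) / (m : ℝ))⌉₊ ≤ n ∧
        ℓ ≤ ⌊(m : ℝ) / 2 * Real.logb (q : ℝ) (n : ℝ)⌋₊ := by
  have hfinrank : Module.finrank ℚ K = m := by rw [finrank_eq_of_isEmbSystem hemb, hm]
  have hm0 : 0 < m := hfinrank ▸ Module.finrank_pos
  have hq1 : 1 < q := by
    rw [← hq]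
    refine Nat.one_lt_iff_ne_zero_and_ne_one.mpr ⟨?_, ?_⟩
    · exact Ideal.absNorm_eq_zero_iff.not.mpr hp0
    · exact Ideal.absNorm_eq_one_iff.not.mpr hp.ne_top
  have hbound : (q : ℝ) ^ (2 * (ℓ : ℝ) / m) ≤
      minDist (idealImage ρ σ (p ^ ℓ)) ^ 2 / minDist (idealImage ρ σ (p ^ 0)) ^ 2 := by
    have hlower := finrank_mul_absNorm_rpow_le_sq_minDist hemb (pow_ne_zero ℓ hp0)
    rw [map_pow, hq, hfinrank, Nat.cast_pow, ← Real.rpow_natCast, ← Real.rpow_mul q.cast_nonneg,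
      mul_div_assoc', mul_comm (ℓ : ℝ)] at hlower
    rw [pow_zero, Ideal.one_eq_top, sq_minDist_idealImage_top hemb, hfinrank,
      le_div_iff₀ (by exact_mod_cast hm0), mul_comm]
    exact hlower
  refine ⟨hbound, fun n C₀ ⟨u, hu, v, hv, huv⟩ hmin => ?_⟩
  have hceil : ⌈(q : ℝ) ^ (2 * (ℓ : ℝ) / m)⌉₊ ≤ n :=
    (Nat.ceil_mono hbound).trans ((hmin u hu v hv huv).trans (hDist_le_length u v))
  exact ⟨hceil, le_floor_half_mul_logb (by exact_mod_cast hq1) hm0 hceil⟩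

/-- `d_E(L_ℓ)²/d_E(L_0)² ≥ q^{2ℓ/m}`; consequently any `q`-ary code of
length `n` (with at least two codewords) whose minimum Hamming distance is at least
`⌈d_E(L_ℓ)²/d_E(L_0)²⌉` must have `n ≥ ⌈q^{2ℓ/m}⌉`, equivalently `ℓ ≤ ⌊(m/2)·log_q n⌋`. -/
theorem statement14 {K : Type*} [Field K] [NumberField K] {s t m : ℕ}
    (ρ : Fin s → (K →+* ℝ)) (σ : Fin t → (K →+* ℂ)) (hemb : IsEmbSystem ρ σ)
    (hm : m = s + 2 * t)
    (p : Ideal (NumberField.RingOfIntegers K)) (hp : p.IsPrime) (hp0 : p ≠ ⊥)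
    (q : ℕ) (hq : Ideal.absNorm p = q) (ℓ : ℕ) (hℓ : 1 ≤ ℓ) :
    (q : ℝ) ^ (2 * (ℓ : ℝ) / (m : ℝ)) ≤
      (minDist (idealImage ρ σ (p ^ ℓ))) ^ 2 / (minDist (idealImage ρ σ (p ^ 0))) ^ 2 ∧
    ∀ (n : ℕ) (C₀ : Set (Fin n → NumberField.RingOfIntegers K)),
      (∃ u ∈ C₀, ∃ v ∈ C₀, u ≠ v) →
      (∀ u ∈ C₀, ∀ v ∈ C₀, u ≠ v →
        ⌈(minDist (idealImage ρ σ (p ^ ℓ))) ^ 2 /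
          (minDist (idealImage ρ σ (p ^ 0))) ^ 2⌉₊ ≤ hDist u v) →
      ⌈(q : ℝ) ^ (2 * (ℓ : ℝ) / (m : ℝ))⌉₊ ≤ n ∧
        ℓ ≤ ⌊(m : ℝ) / 2 * Real.logb (q : ℝ) (n : ℝ)⌋₊ :=
  statement14_general ρ σ hemb hm p hp hp0 q hq ℓ
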